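/- Let A have block p-RIC δ_t for each order t, and let h ∈ ℝ^N with Ah = 0. Let G₀ be the set of k blocks of h with largest ℓ₂ norm and decompose G₀^c into consecutive groups G₁, G₂, … of ak blocks each, sorted by decreasing block ℓ₂ norm. Then for 0 < p ≤ 1: (1 − δ_{(a+1)k}) ‖h_{G₀∪G₁}‖_2^p ≤ (1 + δ_{ak})(ak)^{p/2−1} ‖h_{G₀^c}‖_{2,p}^p. -/

import Mathlib

/-!
Split `h` into the head `h_T`, `T = G₀ ∪ G₁`, and the tail `h_{Tᶜ} = ∑_{j ≥ 2} h_{G_j}`.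
Since `A h = 0`, the vectors `A h_T` and `A h_{Tᶜ}` differ only by sign, so the lower RIP bound
of order `(a+1)k` on the head is controlled by `‖A h_{Tᶜ}‖_p^p`. For `p ≤ 1` this quantity is
subadditive, and the upper RIP bound of order `ak` applies to each tail block. Finally, every
block in `G_{j+1}` is no larger than the `p`-power mean of the `ak` blocks in `G_j`, which gives
`‖h_{G_{j+1}}‖₂^p ≤ (ak)^{p/2-1} ‖h_{G_j}‖_{2,p}^p`; these bounds add up to `‖h_{G₀ᶜ}‖_{2,p}^p`.
-/

open Finset Function

theorem Real.abs_sum_rpow_le_sum_abs_rpow {ι : Type*} (s : Finset ι) (f : ι → ℝ) {p : ℝ}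
    (hp : 0 < p) (hp1 : p ≤ 1) : |∑ j ∈ s, f j| ^ p ≤ ∑ j ∈ s, |f j| ^ p := by
  induction s using Finset.cons_induction with
  | empty => simp [Real.zero_rpow hp.ne']
  | cons a s ha ih =>
    rw [sum_cons, sum_cons]
    calc |f a + ∑ j ∈ s, f j| ^ p ≤ (|f a| + |∑ j ∈ s, f j|) ^ p := by gcongr; exact abs_add_le _ _
      _ ≤ |f a| ^ p + |∑ j ∈ s, f j| ^ p :=
        Real.rpow_add_le_add_rpow (abs_nonneg _) (abs_nonneg _) hp.le hp1
      _ ≤ |f a| ^ p + ∑ j ∈ s, |f j| ^ p := by gcongr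

theorem EuclideanSpace.sum_abs_rpow_sum_le {ι κ : Type*} [Fintype ι] (s : Finset κ)
    (x : κ → EuclideanSpace ℝ ι) {p : ℝ} (hp : 0 < p) (hp1 : p ≤ 1) :
    ∑ i, |(∑ j ∈ s, x j) i| ^ p ≤ ∑ j ∈ s, ∑ i, |x j i| ^ p := by
  rw [sum_comm]
  gcongr with i
  rw [WithLp.ofLp_sum, Finset.sum_apply]
  exact Real.abs_sum_rpow_le_sum_abs_rpow s _ hp hp1

theorem Real.sqrt_sum_sq_rpow_le_mul_sum_rpow {ι : Type*} {U V : Finset ι} {x : ι → ℝ} {N : ℕ}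
    {p : ℝ} (hp : 0 < p) (hx : ∀ i, 0 ≤ x i) (hUV : ∀ i ∈ U, ∀ j ∈ V, x i ≤ x j)
    (hU : #U ≤ N) (hV : U.Nonempty → N ≤ #V) :
    √(∑ i ∈ U, x i ^ 2) ^ p ≤ (N : ℝ) ^ (p / 2 - 1) * ∑ j ∈ V, x j ^ p := by
  set S := ∑ j ∈ V, x j ^ p
  have hS : 0 ≤ S := sum_nonneg fun j _ => Real.rpow_nonneg (hx j) p
  rcases U.eq_empty_or_nonempty with rfl | hne
  · rw [sum_empty, Real.sqrt_zero, Real.zero_rpow hp.ne']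
    positivity
  have hN : (0 : ℝ) < N := by exact_mod_cast (card_pos.2 hne).trans_le hU
  have hSN : 0 ≤ S / N := div_nonneg hS hN.le
  -- each entry on `U` is at most the `p`-power mean of the entries on `V`
  have hmean : ∀ i ∈ U, x i ^ 2 ≤ (S / N) ^ (2 / p) := by
    intro i hi
    have hle : N * x i ^ p ≤ S := calc
      (N : ℝ) * x i ^ p ≤ #V * x i ^ p :=
        mul_le_mul_of_nonneg_right (by exact_mod_cast hV hne) (Real.rpow_nonneg (hx i) p)
      _ ≤ S := by
        rw [← nsmul_eq_mul, ← sum_const]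
        exact sum_le_sum fun j hj => Real.rpow_le_rpow (hx i) (hUV i hi j hj) hp.le
    calc x i ^ 2 = (x i ^ p) ^ (2 / p) := by
          rw [← Real.rpow_mul (hx i), mul_div_cancel₀ _ hp.ne', Real.rpow_two]
      _ ≤ (S / N) ^ (2 / p) := by
          gcongr
          exacts [Real.rpow_nonneg (hx i) p, (le_div_iff₀' hN).2 hle]
  have hsum : ∑ i ∈ U, x i ^ 2 ≤ N * (S / N) ^ (2 / p) := calc
    ∑ i ∈ U, x i ^ 2 ≤ #U * (S / N) ^ (2 / p) := by
        rw [← nsmul_eq_mul]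
        exact sum_le_card_nsmul _ _ _ hmean
    _ ≤ N * (S / N) ^ (2 / p) := by gcongr
  calc √(∑ i ∈ U, x i ^ 2) ^ p = (∑ i ∈ U, x i ^ 2) ^ (p / 2) := by
        rw [Real.sqrt_eq_rpow, ← Real.rpow_mul (sum_nonneg fun i _ => sq_nonneg _),
          one_div_mul_eq_div]
    _ ≤ (N * (S / N) ^ (2 / p)) ^ (p / 2) := by gcongr
    _ = N ^ (p / 2) * (S / N) := by
        rw [Real.mul_rpow hN.le (Real.rpow_nonneg hSN _), ← Real.rpow_mul hSN,
          show 2 / p * (p / 2) = 1 by field_simp, Real.rpow_one]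
    _ = (N : ℝ) ^ (p / 2 - 1) * S := by
        rw [Real.rpow_sub hN, Real.rpow_one]
        ring

theorem sum_Ico_sqrt_sum_sq_rpow_le {ι : Type*} {x : ι → ℝ} {G : ℕ → Finset ι} {N : ℕ}
    {p : ℝ} (hp : 0 < p) (hx : ∀ i, 0 ≤ x i) (hcard : ∀ j, 1 ≤ j → #(G j) ≤ N)
    (hfull : ∀ j, 1 ≤ j → (G (j + 1)).Nonempty → #(G j) = N)
    (hsort : ∀ j, ∀ i ∈ G (j + 1), ∀ i' ∈ G j, x i ≤ x i') (M : ℕ) :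
    ∑ j ∈ Ico 2 (M + 1), √(∑ i ∈ G j, x i ^ 2) ^ p ≤
      (N : ℝ) ^ (p / 2 - 1) * ∑ j ∈ Ico 1 M, ∑ i ∈ G j, x i ^ p := by
  refine (sum_Ico_add' (fun j => √(∑ i ∈ G j, x i ^ 2) ^ p) 1 M 1).symm.trans_le ?_
  rw [mul_sum]
  refine sum_le_sum fun j hj => ?_
  have hj1 := (mem_Ico.1 hj).1
  exact Real.sqrt_sum_sq_rpow_le_mul_sum_rpow hp hx (hsort j) (hcard (j + 1) (by omega))
    fun hne => (hfull j hj1 hne).ge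

theorem sum_norm_indicator_sq {ι E : Type*} [Fintype ι] [SeminormedAddCommGroup E]
    (T : Finset ι) (h : ι → E) :
    ∑ i, ‖Set.indicator (↑T) h i‖ ^ 2 = ∑ i ∈ T, ‖h i‖ ^ 2 :=
  sum_indicator_subset_of_eq_zero h (fun _ v => ‖v‖ ^ 2) (subset_univ T) (by simp)

theorem sum_abs_rpow_map_indicator_compl {ι ι' E : Type*} [Fintype ι'] [AddCommGroup E]
    [Module ℝ E] {A : (ι → E) →ₗ[ℝ] EuclideanSpace ℝ ι'} {h : ι → E} (hh : A h = 0)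
    (s : Set ι) (p : ℝ) :
    ∑ i, |A (s.indicator h) i| ^ p = ∑ i, |A (sᶜ.indicator h) i| ^ p := by
  have hsum : A (s.indicator h) + A (sᶜ.indicator h) = 0 := by
    rw [← map_add, Set.indicator_self_add_compl, hh]
  simp [eq_neg_of_add_eq_zero_left hsum]

theorem sum_abs_rpow_map_indicator_biUnion_le {ι ι' κ E : Type*} [Fintype ι] [Fintype ι']
    [DecidableEq ι] [SeminormedAddCommGroup E] [Module ℝ E]
    (A : (ι → E) →ₗ[ℝ] EuclideanSpace ℝ ι') {s : ℕ} {δ p : ℝ} (hp : 0 < p) (hp1 : p ≤ 1)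
    (hRIP : ∀ v : ι → E, (∃ T : Finset ι, #T ≤ s ∧ ∀ i ∉ T, v i = 0) →
      ∑ i, |A v i| ^ p ≤ (1 + δ) * √(∑ i, ‖v i‖ ^ 2) ^ p)
    (h : ι → E) (J : Finset κ) {G : κ → Finset ι} (hdisj : Pairwise (Disjoint on G))
    (hcard : ∀ j ∈ J, #(G j) ≤ s) :
    ∑ i, |A (Set.indicator ↑(J.biUnion G) h) i| ^ p ≤
      (1 + δ) * ∑ j ∈ J, √(∑ i ∈ G j, ‖h i‖ ^ 2) ^ p := by
  have hsplit : Set.indicator ↑(J.biUnion G) h = ∑ j ∈ J, Set.indicator ↑(G j) h := by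
    rw [coe_biUnion]
    simp only [mem_coe]
    rw [indicator_biUnion _ _ fun j _ j' _ hjj' => disjoint_coe.2 (hdisj hjj')]
    ext1 i
    rw [Finset.sum_apply]
  rw [hsplit, map_sum, mul_sum]
  refine (EuclideanSpace.sum_abs_rpow_sum_le J _ hp hp1).trans (sum_le_sum fun j hj => ?_)
  rw [← sum_norm_indicator_sq]
  exact hRIP _ ⟨G j, hcard j hj, fun i hi => Set.indicator_of_notMem hi h⟩

theorem exists_forall_exists_lt_mem {ι : Type*} [Fintype ι] {G : ℕ → Finset ι}
    (hcover : ∀ i, ∃ j, i ∈ G j) : ∃ M, ∀ i, ∃ j < M, i ∈ G j := by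
  choose f hf using hcover
  exact ⟨univ.sup f + 1, fun i => ⟨f i, Nat.lt_succ_of_le (le_sup (mem_univ i)), hf i⟩⟩

theorem compl_biUnion_range_eq_biUnion_Ico {ι : Type*} [Fintype ι] [DecidableEq ι]
    {G : ℕ → Finset ι} (hdisj : Pairwise (Disjoint on G)) {M : ℕ}
    (hM : ∀ i, ∃ j < M, i ∈ G j) (b : ℕ) :
    ((range b).biUnion G)ᶜ = (Ico b M).biUnion G := by
  ext i
  obtain ⟨j, hjM, hij⟩ := hM i
  have hunique : ∀ j', i ∈ G j' → j' = j := fun j' hij' => by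
    by_contra hne
    exact disjoint_left.1 (hdisj hne) hij' hij
  simp only [mem_compl, mem_biUnion, mem_range, mem_Ico, not_exists, not_and]
  constructor
  · exact fun h => ⟨j, ⟨not_lt.1 fun hjb => h j hjb hij, hjM⟩, hij⟩
  · rintro ⟨j', ⟨hbj', -⟩, hij'⟩ j'' hj''b hij''
    obtain rfl := hunique _ hij'
    obtain rfl := hunique _ hij''
    omega

theorem null_space_head_bound_general (n d m k a : ℕ) (p δak δa1k : ℝ)
    (hp : 0 < p) (hp1 : p ≤ 1)
    (hδak : 0 ≤ δak)
    (A : (Fin n → EuclideanSpace ℝ (Fin d)) →ₗ[ℝ] EuclideanSpace ℝ (Fin m))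
    (hRIPu : ∀ v : Fin n → EuclideanSpace ℝ (Fin d),
      (∃ T : Finset (Fin n), T.card ≤ a * k ∧ ∀ i ∉ T, v i = 0) →
      ∑ i, |A v i| ^ p ≤ (1 + δak) * Real.sqrt (∑ i, ‖v i‖ ^ 2) ^ p)
    (hRIPl : ∀ v : Fin n → EuclideanSpace ℝ (Fin d),
      (∃ T : Finset (Fin n), T.card ≤ (a + 1) * k ∧ ∀ i ∉ T, v i = 0) →
      (1 - δa1k) * Real.sqrt (∑ i, ‖v i‖ ^ 2) ^ p ≤ ∑ i, |A v i| ^ p)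
    (h : Fin n → EuclideanSpace ℝ (Fin d)) (hh : A h = 0)
    (G : ℕ → Finset (Fin n))
    (hG0 : (G 0).card = k)
    (hdisj : ∀ i j, i ≠ j → Disjoint (G i) (G j))
    (hcover : ∀ i : Fin n, ∃ j, i ∈ G j)
    (hcard : ∀ j, 1 ≤ j → (G j).card ≤ a * k)
    (hfull : ∀ j, 1 ≤ j → (G (j + 1)).Nonempty → (G j).card = a * k)
    (hsort : ∀ j, ∀ i ∈ G (j + 1), ∀ i' ∈ G j, ‖h i‖ ≤ ‖h i'‖) :
    (1 - δa1k) * Real.sqrt (∑ i ∈ G 0 ∪ G 1, ‖h i‖ ^ 2) ^ p ≤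
      (1 + δak) * ((a : ℝ) * k) ^ (p / 2 - 1) * ∑ i ∈ (G 0)ᶜ, ‖h i‖ ^ p := by
  classical
  obtain ⟨M, hM⟩ := exists_forall_exists_lt_mem hcover
  set T := G 0 ∪ G 1
  have hTc : Tᶜ = (Ico 2 (M + 1)).biUnion G := by
    rw [← compl_biUnion_range_eq_biUnion_Ico hdisj
      fun i => (hM i).imp fun _ ⟨hj, hi⟩ => ⟨hj.trans M.lt_succ_self, hi⟩]
    simp [T, range_add_one, union_comm]
  have hG0c : (G 0)ᶜ = (Ico 1 M).biUnion G := by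
    rw [← compl_biUnion_range_eq_biUnion_Ico hdisj hM]
    simp
  have hTcard : #T ≤ (a + 1) * k :=
    (card_union_le _ _).trans <| by linarith [hcard 1 le_rfl]
  calc (1 - δa1k) * √(∑ i ∈ T, ‖h i‖ ^ 2) ^ p
      ≤ ∑ i, |A (Set.indicator ↑T h) i| ^ p := by
        rw [← sum_norm_indicator_sq]
        exact hRIPl _ ⟨T, hTcard, fun i hi => Set.indicator_of_notMem hi h⟩
    _ = ∑ i, |A (Set.indicator ↑((Ico 2 (M + 1)).biUnion G) h) i| ^ p := by
        rw [sum_abs_rpow_map_indicator_compl hh, ← coe_compl, hTc]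
    _ ≤ (1 + δak) * ∑ j ∈ Ico 2 (M + 1), √(∑ i ∈ G j, ‖h i‖ ^ 2) ^ p :=
        sum_abs_rpow_map_indicator_biUnion_le A hp hp1 hRIPu h _ hdisj
          fun j hj => hcard j (one_le_two.trans (mem_Ico.1 hj).1)
    _ ≤ (1 + δak) * (((a * k : ℕ) : ℝ) ^ (p / 2 - 1) * ∑ j ∈ Ico 1 M, ∑ i ∈ G j, ‖h i‖ ^ p) := by
        gcongr
        exact sum_Ico_sqrt_sum_sq_rpow_le hp (fun i => norm_nonneg (h i)) hcard hfull hsort M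
    _ = (1 + δak) * ((a : ℝ) * k) ^ (p / 2 - 1) * ∑ i ∈ (G 0)ᶜ, ‖h i‖ ^ p := by
        rw [hG0c, sum_biUnion fun j _ j' _ hjj' => hdisj j j' hjj', Nat.cast_mul, mul_assoc]

/-- For `h` in the null space of `A`, with `G 0` the `k` largest blocks of `h`
and `G j`, `j ≥ 1`, consecutive groups of `a*k` blocks sorted by decreasing block ℓ₂ norm,
the block p-RIP constants give
`(1 - δ_{(a+1)k}) ‖h_{G₀∪G₁}‖₂^p ≤ (1 + δ_{ak})(ak)^(p/2-1) ‖h_{G₀ᶜ}‖_{2,p}^p`. -/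
theorem null_space_head_bound (n d m k a : ℕ) (p δak δa1k : ℝ)
    (hp : 0 < p) (hp1 : p ≤ 1) (hk : 0 < k) (ha : 1 < a)
    (hδak : 0 ≤ δak) (hδa1k : 0 ≤ δa1k)
    (A : (Fin n → EuclideanSpace ℝ (Fin d)) →ₗ[ℝ] EuclideanSpace ℝ (Fin m))
    (hRIPu : ∀ v : Fin n → EuclideanSpace ℝ (Fin d),
      (∃ T : Finset (Fin n), T.card ≤ a * k ∧ ∀ i ∉ T, v i = 0) →
      ∑ i, |A v i| ^ p ≤ (1 + δak) * Real.sqrt (∑ i, ‖v i‖ ^ 2) ^ p)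
    (hRIPl : ∀ v : Fin n → EuclideanSpace ℝ (Fin d),
      (∃ T : Finset (Fin n), T.card ≤ (a + 1) * k ∧ ∀ i ∉ T, v i = 0) →
      (1 - δa1k) * Real.sqrt (∑ i, ‖v i‖ ^ 2) ^ p ≤ ∑ i, |A v i| ^ p)
    (h : Fin n → EuclideanSpace ℝ (Fin d)) (hh : A h = 0)
    (G : ℕ → Finset (Fin n))
    (hG0 : (G 0).card = k)
    (hdisj : ∀ i j, i ≠ j → Disjoint (G i) (G j))
    (hcover : ∀ i : Fin n, ∃ j, i ∈ G j)
    (hcard : ∀ j, 1 ≤ j → (G j).card ≤ a * k)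
    (hfull : ∀ j, 1 ≤ j → (G (j + 1)).Nonempty → (G j).card = a * k)
    (hsort : ∀ j, ∀ i ∈ G (j + 1), ∀ i' ∈ G j, ‖h i‖ ≤ ‖h i'‖) :
    (1 - δa1k) * Real.sqrt (∑ i ∈ G 0 ∪ G 1, ‖h i‖ ^ 2) ^ p ≤
      (1 + δak) * ((a : ℝ) * k) ^ (p / 2 - 1) * ∑ i ∈ (G 0)ᶜ, ‖h i‖ ^ p :=
  null_space_head_bound_general n d m k a p δak δa1k hp hp1 hδak A hRIPu hRIPl h hh G hG0 hdisj
    hcover hcard hfull hsort
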